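/- Let g: X → ℝ ∪ {+∞} be a proper generalized polyhedral convex function and C ⊆ X a nonempty generalized polyhedral convex set with (dom g) ∩ C ≠ ∅. Then g + δ_C is a proper generalized polyhedral convex function on X, and its Fenchel conjugate (g + δ_C)* is a proper generalized polyhedral convex function on X* (equipped with the weak* topology). -/

import Mathlib

open Pointwise Topology

/-- A generalized polyhedral convex set: the intersection of a closed affine subspace
with finitely many closed half-spaces given by continuous linear functionals. -/
def IsGPCS (X : Type*) [AddCommGroup X] [Module ℝ X] [TopologicalSpace X] (S : Set X) : Prop :=
  ∃ (L : AffineSubspace ℝ X) (p : ℕ) (a : Fin p → (X →L[ℝ] ℝ)) (c : Fin p → ℝ),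
    IsClosed (L : Set X) ∧ S = {x : X | x ∈ L ∧ ∀ k, a k x ≤ c k}

/-- The epigraph of an extended-real-valued function. -/
def epigraph {X : Type*} (ψ : X → EReal) : Set (X × ℝ) := {p | ψ p.1 ≤ (p.2 : EReal)}

/-- A generalized polyhedral convex function: one whose epigraph is a generalized
polyhedral convex set in `X × ℝ`. -/
def IsGPCF (X : Type*) [AddCommGroup X] [Module ℝ X] [TopologicalSpace X] (ψ : X → EReal) : Prop :=
  IsGPCS (X × ℝ) (epigraph ψ)

/-- A proper function: not identically `+∞` and never `-∞`. -/
def ProperFn {X : Type*} (ψ : X → EReal) : Prop := (∃ x, ψ x ≠ ⊤) ∧ ∀ x, ψ x ≠ ⊥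

/-- Convexity of an extended-real-valued function, via convexity of the epigraph. -/
def ConvexFn {X : Type*} [AddCommGroup X] [Module ℝ X] (ψ : X → EReal) : Prop :=
  Convex ℝ (epigraph ψ)

/-- The effective domain of an extended-real-valued function. -/
def domFn {X : Type*} (ψ : X → EReal) : Set X := {x | ψ x ≠ ⊤}

open Classical in
/-- The indicator function of a set: `0` on the set, `+∞` outside. -/
noncomputable def indFn {X : Type*} (C : Set X) : X → EReal := fun x => if x ∈ C then 0 else ⊤

open Classical in
/-- The DC objective `g - h` with the convention `(+∞) - (+∞) = +∞`. -/
noncomputable def dcObj {X : Type*} (g h : X → EReal) : X → EReal :=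
  fun x => if g x = ⊤ ∧ h x = ⊤ then ⊤ else g x - h x

/-- The subdifferential (in the sense of convex analysis) of `φ` at `x₀`. -/
def SubdiffAt {X : Type*} [AddCommGroup X] [Module ℝ X] [TopologicalSpace X]
    (φ : X → EReal) (x₀ : X) : Set (X →L[ℝ] ℝ) :=
  {p | ∀ x : X, ((p x - p x₀ : ℝ) : EReal) ≤ φ x - φ x₀}

/-- The subdifferential of a function defined on the dual space, with values in `X`
(the dual of `X*` in the weak* topology). -/
def SubdiffStarAt {X : Type*} [AddCommGroup X] [Module ℝ X] [TopologicalSpace X]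
    (Φ : (X →L[ℝ] ℝ) → EReal) (p₀ : X →L[ℝ] ℝ) : Set X :=
  {x | ∀ p : X →L[ℝ] ℝ, ((p x - p₀ x : ℝ) : EReal) ≤ Φ p - Φ p₀}

/-- The normal cone to a convex set `C` at `x₀ ∈ C`. -/
def normalConeAt {X : Type*} [AddCommGroup X] [Module ℝ X] [TopologicalSpace X]
    (C : Set X) (x₀ : X) : Set (X →L[ℝ] ℝ) :=
  {p | ∀ x ∈ C, p x - p x₀ ≤ 0}

/-- The Fenchel conjugate function. -/
noncomputable def conjFn {X : Type*} [AddCommGroup X] [Module ℝ X] [TopologicalSpace X]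
    (φ : X → EReal) : (X →L[ℝ] ℝ) → EReal :=
  fun p => ⨆ x : X, (((p x : ℝ) : EReal) - φ x)

/-- `x₀` is a local solution of: minimize `g - h` over `C`. -/
def IsLocalSolution {X : Type*} [TopologicalSpace X] (g h : X → EReal) (C : Set X)
    (x₀ : X) : Prop :=
  x₀ ∈ C ∧ ∃ U ∈ nhds x₀, ∀ x ∈ C ∩ U, dcObj g h x₀ ≤ dcObj g h x

/-- `x₀` is a (global) solution of: minimize `g - h` over `C`. -/
def IsSolution {X : Type*} (g h : X → EReal) (C : Set X) (x₀ : X) : Prop :=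
  x₀ ∈ C ∧ ∀ x ∈ C, dcObj g h x₀ ≤ dcObj g h x

/-- `S` is open in the relative topology of `C`. -/
def RelOpenIn {X : Type*} [TopologicalSpace X] (C S : Set X) : Prop :=
  ∃ V : Set X, IsOpen V ∧ S = C ∩ V

/-- A semi-closed generalized polyhedral convex subset of `C`: the intersection of a
generalized polyhedral convex subset of `C` with a convex subset of `C` that is open
in the relative topology of `C`. -/
def IsSemiClosedGPCSIn {X : Type*} [AddCommGroup X] [Module ℝ X] [TopologicalSpace X]
    (C S : Set X) : Prop :=
  ∃ P Q : Set X, IsGPCS X P ∧ P ⊆ C ∧ Convex ℝ Q ∧ Q ⊆ C ∧ RelOpenIn C Q ∧ S = P ∩ Q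

/-!
For `x ∈ C` the function `g + δ_C` agrees with `g`, and it is `+∞` elsewhere, so its epigraph is
`epi g ∩ (C × ℝ)`, again generalized polyhedral.

For a proper generalized polyhedral `φ`, a pair `(P, t)` lies in the epigraph of `φ*` iff the
linear functional `(x, r) ↦ P x - r` is bounded by `t` on `epi φ`. Homogenizing
`epi φ - y₀ = {v ∈ L.direction | a v ≤ c - a y₀}` and applying Fourier–Motzkin elimination
(Minkowski–Weyl for polyhedral cones, modulo the lineality space) writes every point of it as
`∑ λᵢ uᵢ + w` with `λ ≥ 0`, `∑ λᵢ sᵢ = 1` and `w` in the lineality space. The bound is then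
equivalent to finitely many weak*-continuous linear inequalities, one for each `(uᵢ, sᵢ)`, plus
linear equations indexed by the lineality space, which cut out a weak*-closed affine subspace.
A constraint with negative vertical coefficient bounds `φ*` at one point, and one finite value
of `φ` keeps `φ*` above `⊥`.
-/

open Finset

theorem Fintype.sum_eq_sum_pos_add_sum_nonpos {ι M : Type*} [Fintype ι] [AddCommMonoid M]
    (a : ι → ℝ) (f : ι → M) :
    ∑ i, f i = ∑ i : {i // 0 < a i}, f i + ∑ j : {j // a j ≤ 0}, f j := by
  classical
  rw [← Fintype.sum_subtype_add_sum_subtype (fun i => 0 < a i) f]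
  congr 1
  exact Fintype.sum_equiv (Equiv.subtypeEquivRight fun i => not_lt) _ _ fun _ => rfl

section FourierMotzkin

variable {V : Type*} [AddCommGroup V] [Module ℝ V] {ι : Type*} (φ : V →ₗ[ℝ] ℝ) (g : ι → V)

-- Generators of `cone g ∩ {φ ≤ 0}`: the `g j` with `φ (g j) ≤ 0`, and for every pair of opposite
-- signs the combination of `g i` and `g j` lying on the hyperplane `φ = 0`.
def fourierMotzkin :
    {j // φ (g j) ≤ 0} ⊕ ({i // 0 < φ (g i)} × {j // φ (g j) ≤ 0}) → V :=
  Sum.elim (fun j => g j) (fun ij => φ (g ij.1) • g ij.2 - φ (g ij.2) • g ij.1)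

@[simp]
theorem fourierMotzkin_inl (j : {j // φ (g j) ≤ 0}) : fourierMotzkin φ g (.inl j) = g j := rfl

@[simp]
theorem fourierMotzkin_inr (ij : {i // 0 < φ (g i)} × {j // φ (g j) ≤ 0}) :
    fourierMotzkin φ g (.inr ij) = φ (g ij.1) • g ij.2 - φ (g ij.2) • g ij.1 := rfl

theorem map_fourierMotzkin_nonpos_self (w) : φ (fourierMotzkin φ g w) ≤ 0 := by
  rcases w with j | ⟨i, j⟩
  · exact j.2
  · simp [mul_comm]

theorem map_fourierMotzkin_nonpos {ψ : V →ₗ[ℝ] ℝ} (hψ : ∀ i, ψ (g i) ≤ 0) (w) :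
    ψ (fourierMotzkin φ g w) ≤ 0 := by
  rcases w with j | ⟨i, j⟩
  · exact hψ j
  · have := mul_nonpos_of_nonneg_of_nonpos i.2.le (hψ j)
    have := mul_nonneg_of_nonpos_of_nonpos j.2 (hψ i)
    simp only [fourierMotzkin_inr, map_sub, map_smul, smul_eq_mul]
    linarith

variable [Fintype ι]

theorem sum_mul_div_smul_fourierMotzkin_inr (l : ι → ℝ) (m : ℝ) :
    ∑ ij : {i // 0 < φ (g i)} × {j // φ (g j) ≤ 0},
        (l ij.1 * l ij.2 / m) • fourierMotzkin φ g (.inr ij) =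
      ((∑ i : {i // 0 < φ (g i)}, l i * φ (g i)) / m) • ∑ j : {j // φ (g j) ≤ 0}, l j • g j +
      ((∑ j : {j // φ (g j) ≤ 0}, l j * -φ (g j)) / m) • ∑ i : {i // 0 < φ (g i)}, l i • g i := by
  have hterm (i : {i // 0 < φ (g i)}) (j : {j // φ (g j) ≤ 0}) :
      (l i * l j / m) • fourierMotzkin φ g (.inr (i, j)) =
        (l i * φ (g i) / m) • (l j • g j) + (l j * -φ (g j) / m) • (l i • g i) := by
    rw [fourierMotzkin_inr]; module
  simp only [Fintype.sum_prod_type, hterm, sum_add_distrib]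
  rw [sum_div, sum_div, sum_smul_sum, sum_smul_sum, sum_comm (s := univ) (t := univ)
    (f := fun (j : {j // φ (g j) ≤ 0}) (i : {i // 0 < φ (g i)}) =>
      (l j * -φ (g j) / m) • (l i • g i))]

theorem exists_nonneg_sum_fourierMotzkin {l : ι → ℝ} (hl : ∀ i, 0 ≤ l i)
    (hφ : φ (∑ i, l i • g i) ≤ 0) :
    ∃ l' : _ → ℝ, (∀ w, 0 ≤ l' w) ∧ ∑ i, l i • g i = ∑ w, l' w • fourierMotzkin φ g w := by
  classical
  set sp := ∑ i : {i // 0 < φ (g i)}, l i * φ (g i)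
  set sm := ∑ j : {j // φ (g j) ≤ 0}, l j * -φ (g j)
  have hsp : 0 ≤ sp := sum_nonneg fun i _ => mul_nonneg (hl i) i.2.le
  have hsm : 0 ≤ sm := sum_nonneg fun j _ => mul_nonneg (hl j) (neg_nonneg.2 j.2)
  have hsp_le : sp ≤ sm := by
    have : sp - sm = φ (∑ i, l i • g i) := by
      simp only [map_sum, map_smul, smul_eq_mul, sp, sm, mul_neg, sum_neg_distrib,
        sub_neg_eq_add]
      exact (Fintype.sum_eq_sum_pos_add_sum_nonpos _ fun i => l i * φ (g i)).symm
    linarith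
  -- When `sm = 0` the witness degenerates to `l` on `{φ ∘ g ≤ 0}` (as `x / 0 = 0`),
  -- and indeed then `sp = 0` forces `l` to vanish on `{0 < φ ∘ g}`.
  refine ⟨Sum.elim (fun j => l j * (1 - sp / sm)) (fun ij => l ij.1 * l ij.2 / sm), ?_, ?_⟩
  · rintro (j | ⟨i, j⟩)
    · exact mul_nonneg (hl j) (sub_nonneg.2 (div_le_one_of_le₀ hsp_le hsm))
    · exact div_nonneg (mul_nonneg (hl i) (hl j)) hsm
  have hnonpos : ∑ j : {j // φ (g j) ≤ 0}, (l j * (1 - sp / sm)) • g j =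
      ∑ j : {j // φ (g j) ≤ 0}, l j • g j - (sp / sm) • ∑ j : {j // φ (g j) ≤ 0}, l j • g j := by
    simp only [mul_sub, mul_one, sub_smul, sum_sub_distrib, smul_sum, smul_smul, mul_comm]
  rw [Fintype.sum_sum_type]
  simp only [Sum.elim_inl, Sum.elim_inr, fourierMotzkin_inl]
  rw [sum_mul_div_smul_fourierMotzkin_inr, hnonpos, Fintype.sum_eq_sum_pos_add_sum_nonpos
    (fun i => φ (g i))]
  rcases eq_or_ne sm 0 with h | h
  · have hsp0 : sp = 0 := le_antisymm (hsp_le.trans h.le) hsp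
    have hpos (i : {i // 0 < φ (g i)}) : l i = 0 :=
      (mul_eq_zero.1 ((sum_eq_zero_iff_of_nonneg fun (i : {i // 0 < φ (g i)}) _ =>
        mul_nonneg (hl i) i.2.le).1 hsp0 i (mem_univ _))).resolve_right i.2.ne'
    simp [h, hpos]
  · rw [div_self h, one_smul]
    abel

end FourierMotzkin

section PolyhedralCone

variable {V : Type*} [AddCommGroup V] [Module ℝ V] {κ : Type*} (f : κ → V →ₗ[ℝ] ℝ)

theorem exists_generators_mod_ker [Finite κ] :
    ∃ (ι : Type) (_ : Fintype ι) (G : ι → V), ∀ z, ∃ l : ι → ℝ, (∀ i, 0 ≤ l i) ∧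
      ∀ k, f k (z - ∑ i, l i • G i) = 0 := by
  classical
  have := Fintype.ofFinite κ
  set A : V →ₗ[ℝ] κ → ℝ := LinearMap.pi f
  let b := Module.finBasis ℝ (LinearMap.range A)
  choose v hv using fun i => LinearMap.mem_range.1 (b i).2
  refine ⟨Fin (Module.finrank ℝ (LinearMap.range A)) ⊕ Fin (Module.finrank ℝ (LinearMap.range A)),
    inferInstance, Sum.elim v (-v), fun z => ?_⟩
  set c := b.repr ⟨A z, LinearMap.mem_range_self A z⟩
  refine ⟨Sum.elim (fun i => max (c i) 0) (fun i => max (-c i) 0),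
    fun w => by cases w <;> simp, fun k => ?_⟩
  have hsum : ∑ w, Sum.elim (fun i => max (c i) 0) (fun i => max (-c i) 0) w • Sum.elim v (-v) w =
      ∑ i, c i • v i := by
    simp only [Fintype.sum_sum_type, Sum.elim_inl, Sum.elim_inr, Pi.neg_apply, smul_neg,
      sum_neg_distrib, ← sub_eq_add_neg, ← sum_sub_distrib, ← sub_smul,
      max_zero_sub_max_neg_zero_eq_self]
  have hA : A (z - ∑ i, c i • v i) = 0 := by
    rw [map_sub, map_sum, sub_eq_zero]
    simp only [map_smul, hv]
    have := congrArg Subtype.val (b.sum_repr ⟨A z, LinearMap.mem_range_self A z⟩)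
    rw [Submodule.coe_sum] at this
    exact this.symm
  rw [hsum]
  exact congrFun hA k

theorem exists_generators_polyhedralCone [Finite κ] (S : Finset κ) :
    ∃ (ι : Type) (_ : Fintype ι) (G : ι → V), (∀ i, ∀ k ∈ S, f k (G i) ≤ 0) ∧
      ∀ z, (∀ k ∈ S, f k z ≤ 0) → ∃ l : ι → ℝ, (∀ i, 0 ≤ l i) ∧
        ∀ k, f k (z - ∑ i, l i • G i) = 0 := by
  classical
  induction S using Finset.induction_on with
  | empty =>
    obtain ⟨ι, _, G, hG⟩ := exists_generators_mod_ker f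
    exact ⟨ι, _, G, by simp, fun z _ => hG z⟩
  | insert k S _ ih =>
    obtain ⟨ι, _, G, hGS, hdec⟩ := ih
    refine ⟨_, inferInstance, fourierMotzkin (f k) G, fun w k' hk' => ?_, fun z hz => ?_⟩
    · rcases mem_insert.1 hk' with rfl | hk'
      · exact map_fourierMotzkin_nonpos_self _ _ w
      · exact map_fourierMotzkin_nonpos _ _ (fun i => hGS i k' hk') w
    · obtain ⟨l, hl, hlz⟩ := hdec z fun k' hk' => hz k' (mem_insert_of_mem hk')
      have hk : f k (∑ i, l i • G i) ≤ 0 := by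
        rw [← sub_eq_zero.1 ((map_sub _ _ _).symm.trans (hlz k))]
        exact hz k (mem_insert_self k S)
      obtain ⟨l', hl', heq⟩ := exists_nonneg_sum_fourierMotzkin (f k) G hl hk
      exact ⟨l', hl', by rw [← heq]; exact hlz⟩

end PolyhedralCone

section Resolution

variable {Y : Type*} [AddCommGroup Y] [Module ℝ Y]

theorem exists_resolution_polyhedron (L₀ : Submodule ℝ Y) {κ : Type*} [Finite κ]
    (a : κ → Y →ₗ[ℝ] ℝ) (c : κ → ℝ) :
    ∃ (ι : Type) (_ : Fintype ι) (u : ι → Y) (s : ι → ℝ),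
      (∀ i, u i ∈ L₀ ∧ 0 ≤ s i ∧ ∀ k, a k (u i) ≤ s i * c k) ∧
      ∀ v ∈ L₀, (∀ k, a k v ≤ c k) → ∃ l : ι → ℝ, (∀ i, 0 ≤ l i) ∧
        ∑ i, l i * s i = 1 ∧ ∀ k, a k (v - ∑ i, l i • u i) = 0 := by
  classical
  have := Fintype.ofFinite κ
  -- Homogenization: `v` lies in the polyhedron iff `(v, 1)` lies in the cone
  -- `{(v, t) | 0 ≤ t, a v ≤ t • c}`.
  let F : Option κ → (L₀ × ℝ →ₗ[ℝ] ℝ) := fun o => o.elim (-LinearMap.snd ℝ L₀ ℝ)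
    fun k => (a k ∘ₗ L₀.subtype ∘ₗ LinearMap.fst ℝ L₀ ℝ) - c k • LinearMap.snd ℝ L₀ ℝ
  have hF_none (z : L₀ × ℝ) : F none z = -z.2 := rfl
  have hF_some (k : κ) (z : L₀ × ℝ) : F (some k) z = a k z.1 - c k * z.2 := rfl
  obtain ⟨ι, _, G, hG, hdec⟩ := exists_generators_polyhedralCone F univ
  refine ⟨ι, inferInstance, fun i => (G i).1, fun i => (G i).2,
    fun i => ⟨(G i).1.2, ?_, fun k => ?_⟩, fun v hv hvc => ?_⟩
  · simpa [hF_none] using hG i none (mem_univ _)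
  · have := hG i (some k) (mem_univ _)
    rw [hF_some] at this
    linarith
  · obtain ⟨l, hl, hlz⟩ := hdec (⟨v, hv⟩, 1) fun o _ => by
      cases o <;> simp [hF_none, hF_some, hvc]
    set z : L₀ × ℝ := (⟨v, hv⟩, 1) - ∑ i, l i • G i
    have hsnd : z.2 = 1 - ∑ i, l i * (G i).2 := by simp [z, Prod.snd_sum]
    have hfst : (z.1 : Y) = v - ∑ i, l i • ((G i).1 : Y) := by simp [z, Prod.fst_sum]
    have h1 : ∑ i, l i * (G i).2 = 1 := by
      have := hlz none
      rw [hF_none, hsnd] at this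
      linarith
    refine ⟨l, hl, h1, fun k => ?_⟩
    have := hlz (some k)
    rwa [hF_some, hsnd, hfst, h1, sub_self, mul_zero, sub_zero] at this

theorem LinearMap.nonpos_of_forall_natCast_smul_le (T : Y →ₗ[ℝ] ℝ) {w : Y} {τ : ℝ}
    (h : ∀ n : ℕ, T ((n : ℝ) • w) ≤ τ) : T w ≤ 0 := by
  by_contra! hpos
  obtain ⟨n, hn⟩ := exists_nat_gt (τ / T w)
  have := h n
  rw [map_smul, smul_eq_mul] at this
  rw [div_lt_iff₀ hpos] at hn
  linarith

theorem forall_le_iff_of_resolution {L₀ : Submodule ℝ Y} {κ : Type*} {a : κ → Y →ₗ[ℝ] ℝ}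
    {c : κ → ℝ} (hc : ∀ k, 0 ≤ c k) {ι : Type*} [Fintype ι] {u : ι → Y} {s : ι → ℝ}
    (hgen : ∀ i, u i ∈ L₀ ∧ 0 ≤ s i ∧ ∀ k, a k (u i) ≤ s i * c k)
    (hdec : ∀ v ∈ L₀, (∀ k, a k v ≤ c k) → ∃ l : ι → ℝ, (∀ i, 0 ≤ l i) ∧
      ∑ i, l i * s i = 1 ∧ ∀ k, a k (v - ∑ i, l i • u i) = 0)
    (T : Y →ₗ[ℝ] ℝ) (τ : ℝ) :
    (∀ v ∈ L₀, (∀ k, a k v ≤ c k) → T v ≤ τ) ↔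
      (∀ w ∈ L₀, (∀ k, a k w = 0) → T w = 0) ∧ ∀ i, T (u i) ≤ s i * τ := by
  constructor
  · intro h
    have hray : ∀ w ∈ L₀, (∀ k, a k w ≤ 0) → T w ≤ 0 := fun w hw hwk =>
      T.nonpos_of_forall_natCast_smul_le fun n => h _ (L₀.smul_mem _ hw) fun k => by
        rw [map_smul, smul_eq_mul]
        exact (mul_nonpos_of_nonneg_of_nonpos n.cast_nonneg (hwk k)).trans (hc k)
    refine ⟨fun w hw hwk => le_antisymm (hray w hw fun k => (hwk k).le) ?_, fun i => ?_⟩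
    · simpa using hray (-w) (L₀.neg_mem hw) fun k => by simp [hwk k]
    · obtain ⟨hu, hs, hau⟩ := hgen i
      rcases hs.eq_or_lt with hs0 | hs0
      · rw [← hs0, zero_mul]
        exact hray _ hu fun k => by simpa [← hs0] using hau k
      · have := h ((s i)⁻¹ • u i) (L₀.smul_mem _ hu) fun k => by
          rw [map_smul, smul_eq_mul, inv_mul_le_iff₀ hs0]
          exact hau k
        rwa [map_smul, smul_eq_mul, inv_mul_le_iff₀ hs0] at this
  · rintro ⟨hlin, hu⟩ v hv hvc
    obtain ⟨l, hl, hls, hres⟩ := hdec v hv hvc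
    have hmem : v - ∑ i, l i • u i ∈ L₀ :=
      L₀.sub_mem hv (L₀.sum_mem fun i _ => L₀.smul_mem _ (hgen i).1)
    calc T v = T (v - ∑ i, l i • u i) + ∑ i, l i * T (u i) := by simp
      _ ≤ 0 + ∑ i, l i * (s i * τ) := by
        rw [hlin _ hmem hres]
        gcongr with i
        exacts [hl i, hu i]
      _ = τ := by simp_rw [zero_add, ← mul_assoc, ← sum_mul, hls, one_mul]

theorem AffineSubspace.forall_le_iff_direction
    {L : AffineSubspace ℝ Y} {y₀ : Y} (hy₀ : y₀ ∈ L) {κ : Type*} (a : κ → Y →ₗ[ℝ] ℝ)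
    (c : κ → ℝ) (T : Y →ₗ[ℝ] ℝ) (t : ℝ) :
    (∀ y ∈ L, (∀ k, a k y ≤ c k) → T y ≤ t) ↔
      ∀ v ∈ L.direction, (∀ k, a k v ≤ c k - a k y₀) → T v ≤ t - T y₀ := by
  constructor
  · intro h v hv hvc
    have := h (v + y₀) (L.vadd_mem_of_mem_direction hv hy₀) fun k => by
      rw [map_add]; linarith [hvc k]
    rw [map_add] at this
    linarith
  · intro h y hy hyc
    have := h (y - y₀) (L.vsub_mem_direction hy hy₀) fun k => by
      rw [map_sub]; linarith [hyc k]
    rw [map_sub] at this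
    linarith

end Resolution

section GeneralizedPolyhedral

variable {Z W : Type*} [AddCommGroup Z] [Module ℝ Z] [TopologicalSpace Z]
  [AddCommGroup W] [Module ℝ W] [TopologicalSpace W]

theorem isGPCS_setOf_mem_and_le (L : AffineSubspace ℝ Z) (hL : IsClosed (L : Set Z))
    {ι : Type*} [Fintype ι] (a : ι → Z →L[ℝ] ℝ) (c : ι → ℝ) :
    IsGPCS Z {z | z ∈ L ∧ ∀ i, a i z ≤ c i} := by
  let e := Fintype.equivFin ι
  refine ⟨L, Fintype.card ι, fun k => a (e.symm k), fun k => c (e.symm k), hL, ?_⟩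
  ext z
  exact Iff.rfl.and (e.symm.forall_congr_right (q := fun i => a i z ≤ c i)).symm

theorem isGPCS_setOf_eq_and_le {J ι : Type*} [Fintype ι] (ℓ : J → Z →L[ℝ] ℝ) (b : J → ℝ)
    (a : ι → Z →L[ℝ] ℝ) (c : ι → ℝ) :
    IsGPCS Z {z | (∀ j, ℓ j z = b j) ∧ ∀ i, a i z ≤ c i} := by
  let L : AffineSubspace ℝ Z :=
    { carrier := {z | ∀ j, ℓ j z = b j}
      smul_vsub_vadd_mem' := fun t z₁ z₂ z₃ h₁ h₂ h₃ j => by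
        simp [h₁ j, h₂ j, h₃ j] }
  have hL : IsClosed (L : Set Z) := by
    rw [show (L : Set Z) = ⋂ j, {z | ℓ j z = b j} by ext; simp only [Set.mem_iInter]; rfl]
    exact isClosed_iInter fun j => isClosed_eq (ℓ j).continuous continuous_const
  exact isGPCS_setOf_mem_and_le L hL a c

theorem IsGPCS.inter {S T : Set Z} (hS : IsGPCS Z S) (hT : IsGPCS Z T) : IsGPCS Z (S ∩ T) := by
  obtain ⟨L₁, p₁, a₁, c₁, hL₁, rfl⟩ := hS
  obtain ⟨L₂, p₂, a₂, c₂, hL₂, rfl⟩ := hT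
  convert isGPCS_setOf_mem_and_le (L₁ ⊓ L₂) (hL₁.inter hL₂) (Sum.elim a₁ a₂) (Sum.elim c₁ c₂)
    using 1
  ext z
  simp only [Set.mem_inter_iff, Set.mem_ofPred_eq, AffineSubspace.mem_inf_iff, Sum.forall,
    Sum.elim_inl, Sum.elim_inr]
  tauto

theorem IsGPCS.preimage {S : Set W} (hS : IsGPCS W S) (F : Z →L[ℝ] W) :
    IsGPCS Z (F ⁻¹' S) := by
  obtain ⟨L, p, a, c, hL, rfl⟩ := hS
  refine ⟨L.comap (F : Z →ₗ[ℝ] W).toAffineMap, p, fun k => a k ∘L F, c, ?_, rfl⟩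
  rw [AffineSubspace.coe_comap]
  exact hL.preimage F.continuous

end GeneralizedPolyhedral

section Functions

variable {X : Type*}

theorem iSup_coe_sub_le_coe_iff (f : X → EReal) (φ : X → ℝ) (t : ℝ) :
    ⨆ x, (φ x : EReal) - f x ≤ t ↔ ∀ y ∈ epigraph f, φ y.1 - y.2 ≤ t := by
  simp only [iSup_le_iff, epigraph, Set.mem_ofPred_eq, Prod.forall]
  refine forall_congr' fun x => ?_
  generalize f x = e
  induction e using EReal.rec with
  | bot => simpa [EReal.coe_sub_bot] using ⟨φ x - t - 1, by linarith⟩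
  | coe r =>
    simp only [← EReal.coe_sub, EReal.coe_le_coe_iff]
    exact ⟨fun h s hs => by linarith, fun h => h r le_rfl⟩
  | top => simp [EReal.sub_top]

theorem iSup_coe_sub_ne_bot {f : X → EReal} (hf : ∃ x, f x ≠ ⊤) (φ : X → ℝ) :
    ⨆ x, (φ x : EReal) - f x ≠ ⊥ := by
  obtain ⟨x₀, hx₀⟩ := hf
  refine ne_bot_of_le_ne_bot ?_ (le_iSup (fun x => (φ x : EReal) - f x) x₀)
  generalize f x₀ = e at hx₀
  induction e using EReal.rec <;> simp_all [← EReal.coe_sub]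

theorem ProperFn.add_indFn {g : X → EReal} (hg : ProperFn g) {C : Set X}
    (hC : (domFn g ∩ C).Nonempty) : ProperFn fun x => g x + indFn C x := by
  obtain ⟨x₀, hx₀, hx₀C⟩ := hC
  refine ⟨⟨x₀, by simpa [indFn, hx₀C, domFn] using hx₀⟩, fun x => ?_⟩
  rw [Ne, EReal.add_eq_bot_iff, not_or]
  exact ⟨hg.2 x, by unfold indFn; split_ifs <;> simp⟩

theorem epigraph_add_indFn {g : X → EReal} (hg : ∀ x, g x ≠ ⊥) (C : Set X) :
    epigraph (fun x => g x + indFn C x) = epigraph g ∩ Prod.fst ⁻¹' C := by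
  ext ⟨x, r⟩
  by_cases hx : x ∈ C <;> simp [epigraph, indFn, hx, EReal.add_top_of_ne_bot (hg x)]

end Functions

section Conjugate

variable {X : Type*} [AddCommGroup X] [Module ℝ X] [TopologicalSpace X]

noncomputable def WeakDual.evalProd (x : X) (s : ℝ) : WeakDual ℝ X × ℝ →L[ℝ] ℝ where
  toFun q := q.1 x - s * q.2
  map_add' q q' := by
    change q.1 x + q'.1 x - s * (q.2 + q'.2) = q.1 x - s * q.2 + (q'.1 x - s * q'.2)
    ring
  map_smul' r q := by
    change r * q.1 x - s * (r * q.2) = r * (q.1 x - s * q.2)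
    ring
  cont := ((WeakDual.eval_continuous x).comp continuous_fst).sub
    (continuous_const.mul continuous_snd)

theorem WeakDual.evalProd_apply (x : X) (s : ℝ) (q : WeakDual ℝ X × ℝ) :
    WeakDual.evalProd x s q = q.1 x - s * q.2 := rfl

variable {f : X → EReal} {κ : Type*} {L : AffineSubspace ℝ (X × ℝ)} {a : κ → X × ℝ →L[ℝ] ℝ}
  {c : κ → ℝ}

theorem exists_lt_zero_of_epigraph_eq (hE : epigraph f = {y | y ∈ L ∧ ∀ k, a k y ≤ c k})
    {x₀ : X} {r₀ : ℝ} (hx₀ : f x₀ = r₀) : ∃ k, a k (0, 1) < 0 := by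
  have hmem : ∀ r, r₀ ≤ r → (x₀, r) ∈ L ∧ ∀ k, a k (x₀, r) ≤ c k := fun r hr => by
    rw [← Set.mem_ofPred_eq (p := fun y => y ∈ L ∧ ∀ k, a k y ≤ c k), ← hE]
    show f x₀ ≤ r
    rw [hx₀]
    exact_mod_cast hr
  by_contra! h
  have hdir : ((0 : X), (1 : ℝ)) ∈ L.direction := by
    simpa using L.vsub_mem_direction (hmem (r₀ + 1) (by linarith)).1 (hmem r₀ le_rfl).1
  have hbelow : (x₀, r₀ - 1) ∈ epigraph f := by
    have hsub : (x₀, r₀ - 1) = (x₀, r₀) - ((0 : X), (1 : ℝ)) := by ext <;> simp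
    rw [hE, hsub]
    refine ⟨?_, fun k => ?_⟩
    · simpa [sub_eq_neg_add] using
        L.vadd_mem_of_mem_direction (L.direction.neg_mem hdir) (hmem r₀ le_rfl).1
    · rw [map_sub]
      linarith [(hmem r₀ le_rfl).2 k, h k]
  have : f x₀ ≤ ((r₀ - 1 : ℝ) : EReal) := hbelow
  rw [hx₀, EReal.coe_le_coe_iff] at this
  linarith

theorem exists_conj_ne_top {b : X × ℝ →L[ℝ] ℝ} {γ : ℝ} (hγ : ∀ y ∈ epigraph f, b y ≤ γ)
    (hb : b (0, 1) < 0) : ∃ P : WeakDual ℝ X, ⨆ x, ((P x : ℝ) : EReal) - f x ≠ ⊤ := by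
  set β := b (0, 1)
  refine ⟨StrongDual.toWeakDual ((-β)⁻¹ • (b ∘L ContinuousLinearMap.inl ℝ X ℝ)),
    ne_top_of_le_ne_top (EReal.coe_ne_top ((-β)⁻¹ * γ)) ?_⟩
  rw [iSup_coe_sub_le_coe_iff]
  intro y hy
  have hsplit : b y = b (y.1, 0) + y.2 * β := by
    conv_lhs => rw [show y = (y.1, 0) + y.2 • ((0 : X), (1 : ℝ)) by ext <;> simp]
    rw [map_add, map_smul, smul_eq_mul]
  have hβ : β ≠ 0 := hb.ne
  calc (-β)⁻¹ * b (y.1, 0) - y.2 = (-β)⁻¹ * b y := by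
        rw [hsplit]; field_simp; ring
    _ ≤ (-β)⁻¹ * γ := by gcongr; exacts [inv_nonneg.2 (neg_nonneg.2 hb.le), hγ y hy]

theorem ProperFn.properFn_conj (hf : ProperFn f) (hE : IsGPCF X f) :
    ProperFn fun P : WeakDual ℝ X => ⨆ x, ((P x : ℝ) : EReal) - f x := by
  obtain ⟨L, p, a, c, -, hE⟩ := hE
  obtain ⟨x₀, hx₀⟩ := hf.1
  obtain ⟨k, hk⟩ := exists_lt_zero_of_epigraph_eq hE (EReal.coe_toReal hx₀ (hf.2 x₀)).symm
  refine ⟨exists_conj_ne_top (γ := c k) (fun y hy => ?_) hk, fun P => iSup_coe_sub_ne_bot hf.1 _⟩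
  rw [hE] at hy
  exact hy.2 k

theorem ProperFn.isGPCF_conj (hf : ProperFn f) (hE : IsGPCF X f) :
    IsGPCF (WeakDual ℝ X) fun P : WeakDual ℝ X => ⨆ x, ((P x : ℝ) : EReal) - f x := by
  obtain ⟨L, p, a, c, -, hE⟩ := hE
  obtain ⟨x₀, hx₀⟩ := hf.1
  set y₀ : X × ℝ := (x₀, (f x₀).toReal)
  have hy₀ : y₀ ∈ L ∧ ∀ k, a k y₀ ≤ c k := by
    rw [← Set.mem_ofPred_eq (p := fun y => y ∈ L ∧ ∀ k, a k y ≤ c k), ← hE]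
    exact EReal.le_coe_toReal hx₀
  obtain ⟨ι, _, u, s, hgen, hdec⟩ := exists_resolution_polyhedron L.direction
    (fun k => (a k : X × ℝ →ₗ[ℝ] ℝ)) (fun k => c k - a k y₀)
  let T (P : WeakDual ℝ X) : X × ℝ →ₗ[ℝ] ℝ :=
    (WeakDual.toStrongDual P : X →ₗ[ℝ] ℝ) ∘ₗ LinearMap.fst ℝ X ℝ - LinearMap.snd ℝ X ℝ
  have hT (P : WeakDual ℝ X) (y : X × ℝ) : T P y = P y.1 - y.2 := rfl
  have hsupp (P : WeakDual ℝ X) (t : ℝ) :=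
    (AffineSubspace.forall_le_iff_direction hy₀.1 _ c (T P) t).trans
      (forall_le_iff_of_resolution (fun k => sub_nonneg.2 (hy₀.2 k)) hgen hdec (T P) (t - T P y₀))
  show IsGPCS _ (epigraph _)
  convert isGPCS_setOf_eq_and_le
    (fun w : {w // w ∈ L.direction ∧ ∀ k, a k w = 0} => WeakDual.evalProd w.1.1 0)
    (fun w => w.1.2) (fun i => WeakDual.evalProd ((u i).1 + s i • x₀) (s i))
    (fun i => (u i).2 + s i * y₀.2) using 1
  ext ⟨P, t⟩
  change _ ≤ (t : EReal) ↔ _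
  rw [iSup_coe_sub_le_coe_iff, hE]
  simp only [Set.mem_ofPred_eq, and_imp, ← hT]
  simp only [ContinuousLinearMap.coe_coe] at hsupp
  rw [hsupp P t]
  refine and_congr ?_ (forall_congr' fun i => ?_)
  · simp only [Subtype.forall, and_imp, WeakDual.evalProd_apply, hT, zero_mul, sub_zero,
      sub_eq_zero]
  · rw [hT, hT, WeakDual.evalProd_apply, map_add, map_smul, smul_eq_mul]
    constructor <;> intro h <;> linarith

end Conjugate

theorem stmt15_general {X : Type*} [AddCommGroup X] [Module ℝ X] [TopologicalSpace X]
    (g : X → EReal) (hg2 : ProperFn g) (hg3 : IsGPCF X g)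
    (C : Set X) (hC2 : IsGPCS X C)
    (hdom : (domFn g ∩ C).Nonempty) :
    (ProperFn (fun x => g x + indFn C x) ∧ IsGPCF X (fun x => g x + indFn C x)) ∧
    (ProperFn (fun p : WeakDual ℝ X => ⨆ x : X, (((p x : ℝ) : EReal) - (g x + indFn C x))) ∧
      IsGPCF (WeakDual ℝ X)
        (fun p : WeakDual ℝ X => ⨆ x : X, (((p x : ℝ) : EReal) - (g x + indFn C x)))) := by
  have hproper := hg2.add_indFn hdom
  have hgpcf : IsGPCF X fun x => g x + indFn C x := by
    rw [IsGPCF, epigraph_add_indFn hg2.2]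
    exact hg3.inter (hC2.preimage (ContinuousLinearMap.fst ℝ X ℝ))
  exact ⟨⟨hproper, hgpcf⟩, hproper.properFn_conj hgpcf, hproper.isGPCF_conj hgpcf⟩

/-- `g + δ_C` is a proper generalized polyhedral convex function on `X`,
and its Fenchel conjugate is a proper generalized polyhedral convex function on the dual
space `X*` equipped with the weak* topology. -/
theorem stmt15 {X : Type*} [AddCommGroup X] [Module ℝ X] [TopologicalSpace X]
    [IsTopologicalAddGroup X] [ContinuousSMul ℝ X] [LocallyConvexSpace ℝ X] [T2Space X]
    (g : X → EReal) (hg2 : ProperFn g) (hg3 : IsGPCF X g)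
    (C : Set X) (hC1 : C.Nonempty) (hC2 : IsGPCS X C)
    (hdom : (domFn g ∩ C).Nonempty) :
    (ProperFn (fun x => g x + indFn C x) ∧ IsGPCF X (fun x => g x + indFn C x)) ∧
    (ProperFn (fun p : WeakDual ℝ X => ⨆ x : X, (((p x : ℝ) : EReal) - (g x + indFn C x))) ∧
      IsGPCF (WeakDual ℝ X)
        (fun p : WeakDual ℝ X => ⨆ x : X, (((p x : ℝ) : EReal) - (g x + indFn C x)))) :=
  stmt15_general g hg2 hg3 C hC2 hdom
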